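/- Fix α ∈ [0, 1] and define g(x) = (1 − α)·f*(x) + α·log(1 + f*(x)) for x ≥ 0. Then g(0) = 0; g is differentiable on (0, ∞); g′ is strictly positive, continuous, and strictly decreasing on (0, ∞). -/

import Mathlib

/-!
Write `b` for the bandwidth function and `B = ∑ αₖ / (1 - cₖ f)²` for its derivative, which is
positive and strictly increasing on the admissible frequencies `[0, 1 / max c)`. Hence `f*` is
strictly increasing, continuous and, by the inverse function theorem, differentiable on `(0, ∞)`
with `f*' = 1 / B(f*)`. The chain rule then gives `g' = h ∘ f*` with
`h(f) = (1 - α + α / (1 + f)) / B(f)`, a positive, non-increasing numerator over a positive,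
strictly increasing denominator; so `h` is positive, continuous and strictly decreasing, and so is
`g'`.
-/

open Set Finset Filter Topology

section LeftInverse

variable {b φ : ℝ → ℝ} {s D : Set ℝ}

theorem strictMonoOn_of_leftInvOn (hb : StrictMonoOn b D) (hφ : MapsTo φ s D)
    (hinv : LeftInvOn b φ s) : StrictMonoOn φ s := fun x hx y hy hxy =>
  (hb.lt_iff_lt (hφ hx) (hφ hy)).1 (by rwa [hinv hx, hinv hy])

theorem continuousAt_of_leftInvOn (hb : StrictMonoOn b D) (hφ : MapsTo φ s D)
    (hinv : LeftInvOn b φ s) (hbD : MapsTo b D s) {x : ℝ} (hs : s ∈ 𝓝 x) (hD : D ∈ 𝓝 (φ x)) :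
    ContinuousAt φ x :=
  (strictMonoOn_of_leftInvOn hb hφ hinv).continuousAt_of_image_mem_nhds hs <|
    mem_of_superset hD ((hb.injOn.rightInvOn_of_leftInvOn hinv hbD hφ).surjOn hbD)

theorem hasDerivAt_of_leftInvOn (hb : StrictMonoOn b D) (hφ : MapsTo φ s D)
    (hinv : LeftInvOn b φ s) (hbD : MapsTo b D s) {x b' : ℝ} (hs : s ∈ 𝓝 x)
    (hD : D ∈ 𝓝 (φ x)) (hb' : HasDerivAt b b' (φ x)) (hb'0 : b' ≠ 0) :
    HasDerivAt φ b'⁻¹ x :=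
  hb'.of_local_left_inverse (continuousAt_of_leftInvOn hb hφ hinv hbD hs hD) hb'0
    (eventually_of_mem hs hinv)

end LeftInverse

noncomputable section Bandwidth

variable {ι : Type*} [Fintype ι] {α c : ι → ℝ} {f : ℝ}

def bandwidth (α c : ι → ℝ) (f : ℝ) : ℝ := ∑ k, α k * f / (1 - c k * f)

def bandwidthDeriv (α c : ι → ℝ) (f : ℝ) : ℝ := ∑ k, α k / (1 - c k * f) ^ 2

def freqBound [Nonempty ι] (c : ι → ℝ) : ℝ := 1 / univ.sup' univ_nonempty c

theorem mul_lt_one_of_lt_freqBound [Nonempty ι] (hc : ∀ k, 0 < c k) (hf : f < freqBound c)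
    (k : ι) : c k * f < 1 := by
  have hck : c k ≤ univ.sup' univ_nonempty c := le_sup' c (mem_univ k)
  have hS : 0 < univ.sup' univ_nonempty c := (hc k).trans_le hck
  have hSf : univ.sup' univ_nonempty c * f < 1 := by
    rwa [freqBound, lt_div_iff₀' hS] at hf
  rcases le_or_gt 0 f with hf0 | hf0
  · exact (mul_le_mul_of_nonneg_right hck hf0).trans_lt hSf
  · exact (mul_neg_of_pos_of_neg (hc k) hf0).trans one_pos

theorem hasDerivAt_bandwidth (hf : ∀ k, c k * f ≠ 1) :
    HasDerivAt (bandwidth α c) (bandwidthDeriv α c f) f := by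
  unfold bandwidth bandwidthDeriv
  refine HasDerivAt.fun_sum fun k _ => ?_
  have hk : 1 - c k * f ≠ 0 := sub_ne_zero.2 (hf k).symm
  refine (((hasDerivAt_id f).const_mul (α k)).div
    (((hasDerivAt_id f).const_mul (c k)).const_sub 1) hk).congr_deriv ?_
  simp only [id]
  field_simp
  ring

theorem continuousAt_bandwidthDeriv (hf : ∀ k, c k * f ≠ 1) :
    ContinuousAt (bandwidthDeriv α c) f := by
  unfold bandwidthDeriv
  exact tendsto_finsetSum _ fun k _ =>
    continuousAt_const.div (by fun_prop) (pow_ne_zero 2 (sub_ne_zero.2 (hf k).symm))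

theorem bandwidthDeriv_pos [Nonempty ι] (hα : ∀ k, 0 < α k) (hf : ∀ k, c k * f ≠ 1) :
    0 < bandwidthDeriv α c f :=
  sum_pos (fun k _ => div_pos (hα k) (sq_pos_of_ne_zero (sub_ne_zero.2 (hf k).symm)))
    univ_nonempty

theorem bandwidth_nonneg (hα : ∀ k, 0 ≤ α k) (hf : 0 ≤ f) (hcf : ∀ k, c k * f < 1) :
    0 ≤ bandwidth α c f :=
  sum_nonneg fun k _ => div_nonneg (mul_nonneg (hα k) hf) (sub_nonneg.2 (hcf k).le)

theorem strictMonoOn_bandwidth [Nonempty ι] (hα : ∀ k, 0 < α k) (hc : ∀ k, 0 < c k) :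
    StrictMonoOn (bandwidth α c) (Iio (freqBound c)) := by
  have hne : ∀ f < freqBound c, ∀ k, c k * f ≠ 1 := fun f hf k =>
    (mul_lt_one_of_lt_freqBound hc hf k).ne
  refine strictMonoOn_of_deriv_pos (convex_Iio _)
    (fun f hf => (hasDerivAt_bandwidth (hne f hf)).continuousAt.continuousWithinAt)
    fun f hf => ?_
  rw [interior_Iio] at hf
  rw [(hasDerivAt_bandwidth (hne f hf)).deriv]
  exact bandwidthDeriv_pos hα (hne f hf)

theorem strictMonoOn_bandwidthDeriv [Nonempty ι] (hα : ∀ k, 0 < α k) (hc : ∀ k, 0 < c k) :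
    StrictMonoOn (bandwidthDeriv α c) (Iio (freqBound c)) := by
  intro f _ g hg hfg
  refine sum_lt_sum_of_nonempty univ_nonempty fun k _ => ?_
  have hg1 : 0 < 1 - c k * g := sub_pos.2 (mul_lt_one_of_lt_freqBound hc hg k)
  have hgf : 1 - c k * g < 1 - c k * f :=
    sub_lt_sub_left (mul_lt_mul_of_pos_left hfg (hc k)) 1
  exact div_lt_div_of_pos_left (hα k) (by positivity) (pow_lt_pow_left₀ hgf hg1.le two_ne_zero)

theorem hasDerivAt_bandwidth_inverse [Nonempty ι] (hα : ∀ k, 0 < α k) (hc : ∀ k, 0 < c k)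
    {φ : ℝ → ℝ} (hφ : MapsTo φ (Ici 0) (Ico 0 (freqBound c)))
    (hinv : LeftInvOn (bandwidth α c) φ (Ici 0)) (hmono : StrictMonoOn φ (Ici 0)) (hφ0 : φ 0 = 0)
    {x : ℝ} (hx : 0 < x) : HasDerivAt φ (bandwidthDeriv α c (φ x))⁻¹ x := by
  have hne : ∀ k, c k * φ x ≠ 1 := fun k => (mul_lt_one_of_lt_freqBound hc (hφ hx.le).2 k).ne
  have hφx : 0 < φ x := hφ0 ▸ hmono (mem_Ici.2 le_rfl) hx.le hx
  refine hasDerivAt_of_leftInvOn ((strictMonoOn_bandwidth hα hc).mono Ico_subset_Iio_self) hφ hinv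
    (fun f hf => bandwidth_nonneg (fun k => (hα k).le) hf.1 (mul_lt_one_of_lt_freqBound hc hf.2))
    (Ici_mem_nhds hx) (Ico_mem_nhds hφx (hφ hx.le).2) (hasDerivAt_bandwidth hne)
    (bandwidthDeriv_pos hα hne).ne'

end Bandwidth

noncomputable section Benefit

variable {ι : Type*} [Fintype ι] {α c : ι → ℝ} {a f : ℝ}

def fairBenefit (a f : ℝ) : ℝ := (1 - a) * f + a * Real.log (1 + f)

def fairBenefitDeriv (a f : ℝ) : ℝ := 1 - a + a / (1 + f)

theorem hasDerivAt_fairBenefit (hf : 1 + f ≠ 0) :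
    HasDerivAt (fairBenefit a) (fairBenefitDeriv a f) f := by
  have hlog := ((hasDerivAt_id f).const_add 1).log hf
  refine ((hasDerivAt_id f).const_mul (1 - a)).add (hlog.const_mul a) |>.congr_deriv ?_
  simp only [fairBenefitDeriv, id]
  ring

theorem continuousAt_fairBenefitDeriv (hf : 1 + f ≠ 0) : ContinuousAt (fairBenefitDeriv a) f :=
  continuousAt_const.add (continuousAt_const.div (by fun_prop) hf)

theorem fairBenefitDeriv_pos (ha0 : 0 ≤ a) (ha1 : a ≤ 1) (hf : -1 < f) :
    0 < fairBenefitDeriv a f := by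
  have hf1 : 0 < 1 + f := by linarith
  rcases ha1.lt_or_eq with ha1 | rfl
  · exact add_pos_of_pos_of_nonneg (sub_pos.2 ha1) (div_nonneg ha0 hf1.le)
  · simpa [fairBenefitDeriv] using hf1

theorem antitoneOn_fairBenefitDeriv (ha0 : 0 ≤ a) : AntitoneOn (fairBenefitDeriv a) (Ioi (-1)) :=
  fun f hf g _ hfg => by
    have hf1 : 0 < 1 + f := neg_lt_iff_pos_add'.1 hf
    simp only [fairBenefitDeriv]
    gcongr

def marginalBenefit (a : ℝ) (α c : ι → ℝ) (f : ℝ) : ℝ :=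
  fairBenefitDeriv a f / bandwidthDeriv α c f

theorem marginalBenefit_pos [Nonempty ι] (hα : ∀ k, 0 < α k) (hc : ∀ k, 0 < c k)
    (ha0 : 0 ≤ a) (ha1 : a ≤ 1) (hf : f ∈ Ico 0 (freqBound c)) :
    0 < marginalBenefit a α c f :=
  div_pos (fairBenefitDeriv_pos ha0 ha1 (by linarith [hf.1]))
    (bandwidthDeriv_pos hα fun k => (mul_lt_one_of_lt_freqBound hc hf.2 k).ne)

theorem continuousAt_marginalBenefit [Nonempty ι] (hα : ∀ k, 0 < α k) (hc : ∀ k, 0 < c k)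
    (hf : f ∈ Ico 0 (freqBound c)) :
    ContinuousAt (marginalBenefit a α c) f := by
  have hne : ∀ k, c k * f ≠ 1 := fun k => (mul_lt_one_of_lt_freqBound hc hf.2 k).ne
  exact (continuousAt_fairBenefitDeriv (by linarith [hf.1])).div
    (continuousAt_bandwidthDeriv hne) (bandwidthDeriv_pos hα hne).ne'

theorem strictAntiOn_marginalBenefit [Nonempty ι] (hα : ∀ k, 0 < α k) (hc : ∀ k, 0 < c k)
    (ha0 : 0 ≤ a) (ha1 : a ≤ 1) :
    StrictAntiOn (marginalBenefit a α c) (Ico 0 (freqBound c)) := by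
  intro f hf g hg hfg
  have hf' : -1 < f := by linarith [hf.1]
  have hg' : -1 < g := by linarith [hg.1]
  have hne : ∀ {f}, f ∈ Ico 0 (freqBound c) → ∀ k, c k * f ≠ 1 := fun hf k =>
    (mul_lt_one_of_lt_freqBound hc hf.2 k).ne
  calc fairBenefitDeriv a g / bandwidthDeriv α c g
      ≤ fairBenefitDeriv a f / bandwidthDeriv α c g :=
        div_le_div_of_nonneg_right (antitoneOn_fairBenefitDeriv ha0 hf' hg' hfg.le)
          (bandwidthDeriv_pos hα (hne hg)).le
    _ < fairBenefitDeriv a f / bandwidthDeriv α c f :=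
        div_lt_div_of_pos_left (fairBenefitDeriv_pos ha0 ha1 hf') (bandwidthDeriv_pos hα (hne hf))
          (strictMonoOn_bandwidthDeriv hα hc hf.2 hg.2 hfg)

end Benefit

/-- For `α ∈ [0,1]` and `g(x) = (1−α) f*(x) + α log(1 + f*(x))`: `g(0) = 0`, `g` is
differentiable on `(0,∞)`, and `g′` is strictly positive, continuous, and strictly
decreasing on `(0,∞)`. -/
theorem stmt_15 {ι : Type*} [Fintype ι] [Nonempty ι] (α c : ι → ℝ)
    (hα : ∀ k, 0 < α k) (hc : ∀ k, 0 < c k)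
    (fstar : ℝ → ℝ)
    (hrange : ∀ x : ℝ, 0 ≤ x →
      fstar x ∈ Set.Ico (0 : ℝ) (1 / Finset.univ.sup' Finset.univ_nonempty c))
    (hinv : ∀ x : ℝ, 0 ≤ x → ∑ k, α k * fstar x / (1 - c k * fstar x) = x)
    (hzero : fstar 0 = 0)
    (a : ℝ) (ha0 : 0 ≤ a) (ha1 : a ≤ 1) :
    (1 - a) * fstar 0 + a * Real.log (1 + fstar 0) = 0 ∧
    DifferentiableOn ℝ
      (fun x => (1 - a) * fstar x + a * Real.log (1 + fstar x)) (Set.Ioi 0) ∧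
    (∀ x : ℝ, 0 < x →
      0 < deriv (fun x => (1 - a) * fstar x + a * Real.log (1 + fstar x)) x) ∧
    ContinuousOn
      (deriv (fun x => (1 - a) * fstar x + a * Real.log (1 + fstar x))) (Set.Ioi 0) ∧
    StrictAntiOn
      (deriv (fun x => (1 - a) * fstar x + a * Real.log (1 + fstar x))) (Set.Ioi 0) := by
  have hmaps : MapsTo fstar (Ici 0) (Ico 0 (freqBound c)) := fun x hx => hrange x hx
  have hmaps' : MapsTo fstar (Ioi 0) (Ico 0 (freqBound c)) := hmaps.mono_left Ioi_subset_Ici_self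
  have hleft : LeftInvOn (bandwidth α c) fstar (Ici 0) := fun x hx => hinv x hx
  have hmono : StrictMonoOn fstar (Ici 0) :=
    strictMonoOn_of_leftInvOn ((strictMonoOn_bandwidth hα hc).mono Ico_subset_Iio_self) hmaps hleft
  have hfstar : ∀ x ∈ Ioi (0 : ℝ), HasDerivAt fstar (bandwidthDeriv α c (fstar x))⁻¹ x :=
    fun x hx => hasDerivAt_bandwidth_inverse hα hc hmaps hleft hmono hzero hx
  have hderiv : ∀ x ∈ Ioi (0 : ℝ), HasDerivAt
      (fun x => (1 - a) * fstar x + a * Real.log (1 + fstar x))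
      (marginalBenefit a α c (fstar x)) x := fun x hx =>
    ((hasDerivAt_fairBenefit (by linarith [(hmaps' hx).1])).comp x (hfstar x hx)).congr_deriv
      (div_eq_mul_inv _ _).symm
  have hderiv_eq : EqOn (marginalBenefit a α c ∘ fstar)
      (deriv fun x => (1 - a) * fstar x + a * Real.log (1 + fstar x)) (Ioi 0) :=
    fun x hx => (hderiv x hx).deriv.symm
  refine ⟨by simp [hzero], fun x hx => (hderiv x hx).differentiableAt.differentiableWithinAt,
    fun x hx => (hderiv x hx).deriv ▸ marginalBenefit_pos hα hc ha0 ha1 (hmaps' hx), ?_, ?_⟩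
  · refine ContinuousOn.congr (fun x hx => ?_) hderiv_eq.symm
    exact ((continuousAt_marginalBenefit hα hc (hmaps' hx)).comp
      (hfstar x hx).continuousAt).continuousWithinAt
  · exact ((strictAntiOn_marginalBenefit hα hc ha0 ha1).comp_strictMonoOn
      (hmono.mono Ioi_subset_Ici_self) hmaps').congr hderiv_eq
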